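/- arXiv:2002.10477 — 6 statements merged into one kernel-verified Lean document; each statement's English description precedes it below -/
import Mathlib

section
/- For any vectors θ, x ∈ ℝ^p and scalar y ∈ ℝ and ε ≥ 0, the maximum of (y - ⟨x + δ, θ⟩)² over all δ ∈ ℝ^p with ‖δ‖₂ ≤ ε equals (|y - ⟨x, θ⟩| + ε‖θ‖₂)². -/
open scoped RealInnerProductSpace

theorem stmt_0 (p : ℕ) (θ x : EuclideanSpace ℝ (Fin p)) (y ε : ℝ) (hε : 0 ≤ ε) :
    IsGreatest {r : ℝ | ∃ δ : EuclideanSpace ℝ (Fin p), ‖δ‖ ≤ ε ∧ r = (y - ⟪x + δ, θ⟫)^2}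
      ((|y - ⟪x, θ⟫| + ε * ‖θ‖)^2) := by
  set a := y - ⟪x, θ⟫ with ha
  constructor
  · by_cases hθ : θ = 0
    · refine ⟨0, by simpa using hε, ?_⟩
      simp [hθ, ha]
    · have hθn : (0:ℝ) < ‖θ‖ := norm_pos_iff.mpr hθ
      set s : ℝ := if 0 ≤ a then 1 else -1 with hs
      refine ⟨(-(s * ε) / ‖θ‖) • θ, ?_, ?_⟩
      · have hsabs : |s| = 1 := by
          rcases le_or_gt 0 a with h | h <;> simp [hs, h, not_le.mpr]
        rw [norm_smul]
        simp only [Real.norm_eq_abs, abs_div, abs_neg, abs_mul, hsabs, abs_norm,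
          abs_of_nonneg hε, one_mul]
        rw [div_mul_cancel₀ _ (ne_of_gt hθn)]
      · have hinner : ⟪x + (-(s * ε) / ‖θ‖) • θ, θ⟫ = ⟪x, θ⟫ + (-(s * ε) / ‖θ‖) * ‖θ‖^2 := by
          rw [inner_add_left, real_inner_smul_left, real_inner_self_eq_norm_sq]
        rw [hinner]
        have : y - (⟪x, θ⟫ + -(s * ε) / ‖θ‖ * ‖θ‖ ^ 2) = a + s * ε * ‖θ‖ := by
          field_simp [ha]
          ring
        rw [this]
        have habs : |a + s * ε * ‖θ‖| = |a| + ε * ‖θ‖ := by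
          rcases le_or_gt 0 a with h | h
          · simp only [hs, if_pos h, one_mul]
            rw [abs_of_nonneg (by positivity), abs_of_nonneg h]
          · simp only [hs, if_neg (not_le.mpr h), neg_mul, neg_one_mul]
            rw [abs_of_nonpos (by nlinarith [mul_nonneg hε (norm_nonneg θ)]), abs_of_neg h]; ring
        rw [← habs, sq_abs]
  · rintro r ⟨δ, hδ, rfl⟩
    have h1 : |y - ⟪x + δ, θ⟫| ≤ |a| + ε * ‖θ‖ := by
      rw [inner_add_left]
      have : y - (⟪x, θ⟫ + ⟪δ, θ⟫) = a - ⟪δ, θ⟫ := by rw [ha]; ring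
      rw [this]
      calc |a - ⟪δ, θ⟫| ≤ |a| + |⟪δ, θ⟫| := abs_sub _ _
        _ ≤ |a| + ε * ‖θ‖ := by
            have := abs_real_inner_le_norm δ θ
            have h2 : ‖δ‖ * ‖θ‖ ≤ ε * ‖θ‖ := mul_le_mul_of_nonneg_right hδ (norm_nonneg _)
            linarith
    calc (y - ⟪x + δ, θ⟫)^2 = |y - ⟪x + δ, θ⟫|^2 := (sq_abs _).symm
      _ ≤ (|a| + ε * ‖θ‖)^2 := by
          apply pow_le_pow_left₀ (abs_nonneg _) h1
end

section
/- Fix θ₀ ∈ ℝ^p, σ₀ ≥ 0, ε_test ≥ 0, λ ≥ 0, and define F(θ) = (1+λ)(σ₀² + ‖θ - θ₀‖₂²) + ε_test² ‖θ‖₂² + 2√(2/π) ε_test ‖θ‖₂ (σ₀² + ‖θ - θ₀‖₂²)^{1/2}. If θ* = (1 + γ₀)^{-1} θ₀ where γ₀ ≥ 0 satisfies the fixed-point equations γ₀ = (ε_test² + √(2/π) ε_test A) / (1 + λ + √(2/π) ε_test / A) with A = (1/‖θ₀‖₂) ((1+γ₀)² σ₀² + γ₀² ‖θ₀‖₂²)^{1/2},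 then θ* is a global minimizer of F. -/
/-!
Write `F θ = G (‖θ‖, b θ)` with `b θ = √(σ₀² + ‖θ - θ₀‖²)`, `c = √(2/π) ≤ 1` and
`G (a, b) = (1+λ) b² + ε² a² + 2cε a b`. Since `c² ≤ 1`, `G` is a positive semidefinite quadratic
form, so it lies above its tangent planes; its gradient at `(‖θ*‖, b θ*)` is nonnegative, and
`‖·‖` and `b` are convex, so `F θ - F θ*` is bounded below by a linear functional of `θ - θ*`
built from the subgradients of `‖·‖` and `b` at `θ*`. The fixed-point equations say exactly that
`b θ* = A ‖θ*‖` and that this functional vanishes. If `A = 0` they force `γ₀ = ε = 0`, and then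
`θ* = θ₀` minimizes `(1+λ)(σ₀² + ‖θ - θ₀‖²)`.
-/

open Real RealInnerProductSpace

lemma sq_add_mul_le_sqrt_mul_sqrt (σ s t : ℝ) :
    σ ^ 2 + s * t ≤ √(σ ^ 2 + s ^ 2) * √(σ ^ 2 + t ^ 2) := by
  rw [← Real.sqrt_mul (by positivity)]
  refine (le_abs_self _).trans (Real.abs_le_sqrt ?_)
  nlinarith [mul_nonneg (sq_nonneg σ) (sq_nonneg (s - t))]

lemma quadratic_form_tangent_le {lam ε c : ℝ} (hlam : 0 ≤ lam) (hc : c ^ 2 ≤ 1)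
    (a b a' b' : ℝ) :
    2 * ((ε ^ 2 * a' + c * ε * b') * (a - a') + ((1 + lam) * b' + c * ε * a') * (b - b'))
      ≤ ((1 + lam) * b ^ 2 + ε ^ 2 * a ^ 2 + 2 * c * ε * a * b)
        - ((1 + lam) * b' ^ 2 + ε ^ 2 * a' ^ 2 + 2 * c * ε * a' * b') := by
  nlinarith [sq_nonneg (ε * (a - a') + c * (b - b')),
    mul_nonneg (by linarith : 0 ≤ 1 + lam - c ^ 2) (sq_nonneg (b - b'))]

lemma smul_shrink_stationary {E : Type*} [AddCommGroup E] [Module ℝ E] {γ κ μ : ℝ}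
    (hγ : 1 + γ ≠ 0) (h : γ * κ = μ) (θ₀ : E) :
    κ • ((1 + γ)⁻¹ • θ₀ - θ₀) + μ • (1 + γ)⁻¹ • θ₀ = 0 := by
  have hscalar : κ * ((1 + γ)⁻¹ - 1) + μ * (1 + γ)⁻¹ = 0 := by
    rw [← h]; field_simp; ring
  calc κ • ((1 + γ)⁻¹ • θ₀ - θ₀) + μ • (1 + γ)⁻¹ • θ₀
      = (κ * ((1 + γ)⁻¹ - 1) + μ * (1 + γ)⁻¹) • θ₀ := by module
    _ = 0 := by rw [hscalar, zero_smul]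

section WeightedRisk

variable {E : Type*} [NormedAddCommGroup E]

noncomputable def weightedRisk (lam σ ε c : ℝ) (θ₀ θ : E) : ℝ :=
  (1 + lam) * (σ ^ 2 + ‖θ - θ₀‖ ^ 2) + ε ^ 2 * ‖θ‖ ^ 2
    + 2 * c * ε * ‖θ‖ * √(σ ^ 2 + ‖θ - θ₀‖ ^ 2)

lemma weightedRisk_eq (lam σ ε c : ℝ) (θ₀ θ : E) :
    weightedRisk lam σ ε c θ₀ θ = (1 + lam) * √(σ ^ 2 + ‖θ - θ₀‖ ^ 2) ^ 2 + ε ^ 2 * ‖θ‖ ^ 2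
      + 2 * c * ε * ‖θ‖ * √(σ ^ 2 + ‖θ - θ₀‖ ^ 2) := by
  rw [weightedRisk, Real.sq_sqrt (by positivity)]

variable [InnerProductSpace ℝ E]

lemma inner_sub_le_norm_mul_sub_norm (x y : E) : ⟪x, y - x⟫ ≤ ‖x‖ * (‖y‖ - ‖x‖) := by
  rw [inner_sub_right, real_inner_self_eq_norm_sq]
  nlinarith [real_inner_le_norm x y]

lemma inner_sub_le_sqrt_mul_sub_sqrt (σ : ℝ) (x y : E) :
    ⟪x, y - x⟫ ≤ √(σ ^ 2 + ‖x‖ ^ 2) * (√(σ ^ 2 + ‖y‖ ^ 2) - √(σ ^ 2 + ‖x‖ ^ 2)) := by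
  have hxy : σ ^ 2 + ⟪x, y⟫ ≤ √(σ ^ 2 + ‖x‖ ^ 2) * √(σ ^ 2 + ‖y‖ ^ 2) :=
    (add_le_add_right (real_inner_le_norm x y) _).trans (sq_add_mul_le_sqrt_mul_sqrt σ _ _)
  rw [inner_sub_right, real_inner_self_eq_norm_sq, mul_sub, Real.mul_self_sqrt (by positivity)]
  linarith

theorem weightedRisk_le_of_stationary {lam σ ε c A : ℝ} {θ₀ θs : E}
    (hlam : 0 ≤ lam) (hε : 0 ≤ ε) (hc0 : 0 ≤ c) (hc1 : c ≤ 1) (hA : 0 < A)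
    (hb : √(σ ^ 2 + ‖θs - θ₀‖ ^ 2) = A * ‖θs‖)
    (hstat : (A * (1 + lam) + c * ε) • (θs - θ₀) + (A * ε ^ 2 + c * ε * A ^ 2) • θs = 0)
    (θ : E) :
    weightedRisk lam σ ε c θ₀ θs ≤ weightedRisk lam σ ε c θ₀ θ := by
  rw [weightedRisk_eq, weightedRisk_eq]
  set a := ‖θ‖
  set as := ‖θs‖
  set b := √(σ ^ 2 + ‖θ - θ₀‖ ^ 2)
  set bs := √(σ ^ 2 + ‖θs - θ₀‖ ^ 2)
  have hsub_a : ⟪θs, θ - θs⟫ ≤ as * (a - as) := inner_sub_le_norm_mul_sub_norm θs θ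
  have hsub_b : ⟪θs - θ₀, θ - θs⟫ ≤ bs * (b - bs) := by
    simpa using inner_sub_le_sqrt_mul_sub_sqrt σ (θs - θ₀) (θ - θ₀)
  have horth : A * (ε ^ 2 + c * ε * A) * ⟪θs, θ - θs⟫
      + (A * (1 + lam) + c * ε) * ⟪θs - θ₀, θ - θs⟫ = 0 := by
    have h := congrArg (fun w => ⟪w, θ - θs⟫) hstat
    simp only [inner_add_left, real_inner_smul_left, inner_zero_left] at h
    linarith
  have hslope : 0 ≤ as * ((ε ^ 2 + c * ε * A) * (a - as) + (A * (1 + lam) + c * ε) * (b - bs)) := by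
    refine (mul_nonneg_iff_of_pos_left hA).mp ?_
    calc 0 = A * (ε ^ 2 + c * ε * A) * ⟪θs, θ - θs⟫
          + (A * (1 + lam) + c * ε) * ⟪θs - θ₀, θ - θs⟫ := horth.symm
      _ ≤ A * (ε ^ 2 + c * ε * A) * (as * (a - as))
          + (A * (1 + lam) + c * ε) * (bs * (b - bs)) := by gcongr
      _ = _ := by rw [hb]; ring
  have htangent := quadratic_form_tangent_le (ε := ε) hlam (by nlinarith : c ^ 2 ≤ 1) a b as bs
  rw [hb] at htangent hslope ⊢
  linear_combination htangent + 2 * hslope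

lemma sqrt_sq_add_norm_shrink_sub {σ γ A : ℝ} {θ₀ : E} (hγ : 0 ≤ γ) (hθ₀ : θ₀ ≠ 0)
    (hA : A = 1 / ‖θ₀‖ * √((1 + γ) ^ 2 * σ ^ 2 + γ ^ 2 * ‖θ₀‖ ^ 2)) :
    √(σ ^ 2 + ‖(1 + γ)⁻¹ • θ₀ - θ₀‖ ^ 2) = A * ‖(1 + γ)⁻¹ • θ₀‖ := by
  have hr : 0 < ‖θ₀‖ := norm_pos_iff.mpr hθ₀
  have hX : 0 ≤ (1 + γ) ^ 2 * σ ^ 2 + γ ^ 2 * ‖θ₀‖ ^ 2 := by positivity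
  have hsub : (1 + γ)⁻¹ • θ₀ - θ₀ = ((1 + γ)⁻¹ - 1) • θ₀ := by rw [sub_smul, one_smul]
  rw [hsub, norm_smul, norm_smul, Real.norm_eq_abs, Real.norm_eq_abs, mul_pow, sq_abs,
    abs_of_pos (by positivity : 0 < (1 + γ)⁻¹), hA,
    Real.sqrt_eq_iff_eq_sq (by positivity) (by positivity), mul_pow, mul_pow, Real.sq_sqrt hX]
  field_simp
  ring

end WeightedRisk

theorem stmt_5_general (p : ℕ) (θ₀ : EuclideanSpace ℝ (Fin p)) (hθ₀ : θ₀ ≠ 0)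
    (σ₀ εtest lam : ℝ) (hε : 0 ≤ εtest) (hlam : 0 ≤ lam)
    (F : EuclideanSpace ℝ (Fin p) → ℝ)
    (hF : ∀ θ, F θ = (1 + lam) * (σ₀^2 + ‖θ - θ₀‖^2) + εtest^2 * ‖θ‖^2
      + 2 * Real.sqrt (2 / Real.pi) * εtest * ‖θ‖ * Real.sqrt (σ₀^2 + ‖θ - θ₀‖^2))
    (γ₀ A : ℝ) (hγ₀ : 0 ≤ γ₀)
    (hA : A = (1 / ‖θ₀‖) * Real.sqrt ((1 + γ₀)^2 * σ₀^2 + γ₀^2 * ‖θ₀‖^2))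
    (hfix : γ₀ = (εtest^2 + Real.sqrt (2 / Real.pi) * εtest * A)
      / (1 + lam + Real.sqrt (2 / Real.pi) * εtest / A))
    (θstar : EuclideanSpace ℝ (Fin p)) (hθstar : θstar = (1 + γ₀)⁻¹ • θ₀) :
    ∀ θ, F θstar ≤ F θ := by
  intro θ
  have hr : 0 < ‖θ₀‖ := norm_pos_iff.mpr hθ₀
  have hc1 : √(2 / π) ≤ 1 := Real.sqrt_le_one.mpr ((div_le_one Real.pi_pos).mpr Real.two_le_pi)
  rw [show F = weightedRisk lam σ₀ εtest √(2 / π) θ₀ from funext hF, hθstar]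
  rcases (show 0 ≤ A by rw [hA]; positivity).eq_or_lt with hA0 | hApos
  · have hγ0 : γ₀ = 0 := by
      have hX := (hA0.trans hA).symm
      simp only [one_div, mul_eq_zero, inv_eq_zero, hr.ne', false_or, Real.sqrt_eq_zero'] at hX
      have h1 : γ₀ ^ 2 * ‖θ₀‖ ^ 2 = 0 :=
        le_antisymm (by nlinarith [sq_nonneg ((1 + γ₀) * σ₀)]) (by positivity)
      simpa [hr.ne'] using h1
    have hε0 : εtest = 0 := by
      simp only [hγ0, ← hA0, mul_zero, add_zero, div_zero] at hfix
      simpa [(by positivity : 1 + lam ≠ 0)] using hfix.symm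
    subst hγ0 hε0
    simp only [weightedRisk, add_zero, inv_one, one_smul, sub_self, norm_zero]
    nlinarith [mul_nonneg (by linarith : (0 : ℝ) ≤ 1 + lam) (sq_nonneg ‖θ - θ₀‖)]
  · refine weightedRisk_le_of_stationary hlam hε (Real.sqrt_nonneg _) hc1 hApos
      (sqrt_sq_add_norm_shrink_sub hγ₀ hθ₀ hA) (smul_shrink_stationary (by positivity) ?_ θ₀) θ
    rw [hfix]
    field_simp

/-- The Pareto-optimal estimator θ* = (1+γ₀)⁻¹ θ₀ globally minimizes the
weighted combination F of standard and adversarial risks, where γ₀ satisfies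
the given fixed-point equations. -/
theorem stmt_5 (p : ℕ) (θ₀ : EuclideanSpace ℝ (Fin p)) (hθ₀ : θ₀ ≠ 0)
    (σ₀ εtest lam : ℝ) (hσ : 0 ≤ σ₀) (hε : 0 ≤ εtest) (hlam : 0 ≤ lam)
    (F : EuclideanSpace ℝ (Fin p) → ℝ)
    (hF : ∀ θ, F θ = (1 + lam) * (σ₀^2 + ‖θ - θ₀‖^2) + εtest^2 * ‖θ‖^2
      + 2 * Real.sqrt (2 / Real.pi) * εtest * ‖θ‖ * Real.sqrt (σ₀^2 + ‖θ - θ₀‖^2))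
    (γ₀ A : ℝ) (hγ₀ : 0 ≤ γ₀)
    (hA : A = (1 / ‖θ₀‖) * Real.sqrt ((1 + γ₀)^2 * σ₀^2 + γ₀^2 * ‖θ₀‖^2))
    (hfix : γ₀ = (εtest^2 + Real.sqrt (2 / Real.pi) * εtest * A)
      / (1 + lam + Real.sqrt (2 / Real.pi) * εtest / A))
    (θstar : EuclideanSpace ℝ (Fin p)) (hθstar : θstar = (1 + γ₀)⁻¹ • θ₀) :
    ∀ θ, F θstar ≤ F θ :=
  stmt_5_general p θ₀ hθ₀ σ₀ εtest lam hε hlam F hF γ₀ A hγ₀ hA hfix θstar hθstar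
end

section
/- The function F(θ) = (1+λ)(σ₀² + ‖θ - θ₀‖₂²) + ε_test²‖θ‖₂² + 2√(2/π) ε_test ‖θ‖₂ (σ₀² + ‖θ - θ₀‖₂²)^{1/2} is convex on ℝ^p. -/
/-!
With `c = √(2/π)` and `g θ = √(σ₀² + ‖θ - θ₀‖²)` the function is
`(ε‖θ‖ + c g θ)² + (1 + λ - c²) (g θ)²`. Here `g` is the norm of the affine map
`θ ↦ (σ₀, θ - θ₀)` into the `L²` product `ℝ × ℝᵖ`, hence convex; squares of nonnegative convex
functions are convex, and `1 + λ - c² ≥ 0` because `π > 2`.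
-/

open Real

lemma convexOn_sqrt_sq_add_norm_sub_sq {E : Type*} [SeminormedAddCommGroup E] [NormedSpace ℝ E]
    (c : ℝ) (x₀ : E) : ConvexOn ℝ Set.univ (fun x : E => √(c ^ 2 + ‖x - x₀‖ ^ 2)) := by
  let v : E →ᵃ[ℝ] WithLp 2 (ℝ × E) :=
    (WithLp.linearEquiv 2 ℝ (ℝ × E)).symm.toLinearMap.toAffineMap.comp
      ((AffineMap.const ℝ E c).prod (AffineMap.id ℝ E - AffineMap.const ℝ E x₀))
  have hv : ∀ x, ‖v x‖ = √(c ^ 2 + ‖x - x₀‖ ^ 2) := fun x => by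
    simp [v, WithLp.prod_norm_eq_of_L2]
  simpa only [Set.preimage_univ, Function.comp_def, hv] using
    convexOn_univ_norm.comp_affineMap v

theorem stmt_7_general (p : ℕ) (θ₀ : EuclideanSpace ℝ (Fin p))
    (σ₀ εtest lam : ℝ) (hε : 0 ≤ εtest) (hlam : 0 ≤ lam) :
    ConvexOn ℝ Set.univ (fun θ : EuclideanSpace ℝ (Fin p) =>
      (1 + lam) * (σ₀^2 + ‖θ - θ₀‖^2) + εtest^2 * ‖θ‖^2
      + 2 * Real.sqrt (2 / Real.pi) * εtest * ‖θ‖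
          * Real.sqrt (σ₀^2 + ‖θ - θ₀‖^2)) := by
  set c := √(2 / π)
  have hc : c ^ 2 ≤ 1 + lam := by
    rw [sq_sqrt (by positivity), div_le_iff₀ pi_pos]
    nlinarith [pi_gt_three]
  have hg := convexOn_sqrt_sq_add_norm_sub_sq σ₀ θ₀
  have hlin : ConvexOn ℝ Set.univ fun θ : EuclideanSpace ℝ (Fin p) =>
      εtest * ‖θ‖ + c * √(σ₀ ^ 2 + ‖θ - θ₀‖ ^ 2) :=
    (convexOn_univ_norm.smul hε).add (hg.smul (sqrt_nonneg _))
  have hsum := (hlin.pow (fun θ _ => by positivity) 2).add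
    ((hg.pow (fun θ _ => sqrt_nonneg _) 2).smul (sub_nonneg.2 hc))
  refine hsum.congr fun θ _ => ?_
  simp only [Pi.add_apply, Pi.pow_apply, smul_eq_mul]
  linear_combination (1 + lam) * sq_sqrt (by positivity : 0 ≤ σ₀ ^ 2 + ‖θ - θ₀‖ ^ 2)

/-- Convexity of the weighted standard-plus-adversarial risk F. -/
theorem stmt_7 (p : ℕ) (θ₀ : EuclideanSpace ℝ (Fin p))
    (σ₀ εtest lam : ℝ) (hσ : 0 ≤ σ₀) (hε : 0 ≤ εtest) (hlam : 0 ≤ lam) :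
    ConvexOn ℝ Set.univ (fun θ : EuclideanSpace ℝ (Fin p) =>
      (1 + lam) * (σ₀^2 + ‖θ - θ₀‖^2) + εtest^2 * ‖θ‖^2
      + 2 * Real.sqrt (2 / Real.pi) * εtest * ‖θ‖
          * Real.sqrt (σ₀^2 + ‖θ - θ₀‖^2)) :=
  stmt_7_general p θ₀ σ₀ εtest lam hε hlam
end

section
/- Fix ε > 0, p > 0, δ > 0, and let g(θ) = (1/(2p)) Σ_{i=1}^n (|v_i| + (ε/√p)‖θ‖₂)² for θ ∈ ℝ^p and fixed v ∈ ℝ^n with n = δp. Then sup_θ ⟨q, θ⟩ − g(θ) = (1/(2δp²)) ( (p^{3/2}/ε)‖q‖₂ − ‖v‖₁ )₊² − (1/(2p))‖v‖₂². -/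
open scoped RealInnerProductSpace

lemma stmt_9_aux (a M K nP r : ℝ) (ha : 0 ≤ a) (hr : 0 ≤ r)
    (hMK : M ≤ K) (hnP : 0 < nP) :
    a * M * r - (nP * a^2 / 2) * r^2 ≤ K^2 / (2 * nP) := by
  rw [le_div_iff₀ (by positivity)]
  nlinarith [sq_nonneg (K - nP * a * r),
    mul_le_mul_of_nonneg_left (mul_le_mul_of_nonneg_right hMK (mul_nonneg ha hr)) hnP.le]

/-- Convex conjugate of g(θ) = (1/(2p)) Σᵢ (|vᵢ| + (ε/√p)‖θ‖)². -/
theorem stmt_9 (n p : ℕ) (hn : 0 < n) (hp : 0 < p)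
    (ε δ : ℝ) (hε : 0 < ε) (hδ : 0 < δ) (hnp : (n : ℝ) = δ * p)
    (v : Fin n → ℝ) (q : EuclideanSpace ℝ (Fin p))
    (g : EuclideanSpace ℝ (Fin p) → ℝ)
    (hg : ∀ θ, g θ = (1 / (2 * (p : ℝ))) *
      ∑ i, (|v i| + (ε / Real.sqrt p) * ‖θ‖)^2) :
    sSup {r : ℝ | ∃ θ : EuclideanSpace ℝ (Fin p), r = ⟪q, θ⟫ - g θ} =
      (1 / (2 * δ * (p : ℝ)^2)) *
          (max (((p : ℝ)^((3 : ℝ)/2) / ε) * ‖q‖ - ∑ i, |v i|) 0)^2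
        - (1 / (2 * (p : ℝ))) * (∑ i, (v i)^2) := by
  have hP : (0:ℝ) < p := by exact_mod_cast hp
  have hn' : (0:ℝ) < n := by exact_mod_cast hn
  set P := (p:ℝ) with hPdef
  set sp := Real.sqrt P with hspdef
  have hsp : 0 < sp := Real.sqrt_pos.mpr hP
  have hsp2 : sp^2 = P := Real.sq_sqrt hP.le
  set S := ∑ i, |v i| with hSdef
  have hS0 : 0 ≤ S := Finset.sum_nonneg fun i _ => abs_nonneg _
  set V := ∑ i, (v i)^2 with hVdef
  set Q := ‖q‖ with hQdef
  have hQ0 : 0 ≤ Q := norm_nonneg q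
  set a := ε / (P * sp) with hadef
  have ha0 : 0 < a := div_pos hε (mul_pos hP hsp)
  have hrpow : P ^ ((3:ℝ)/2) = P * sp := by
    rw [show (3:ℝ)/2 = 1 + 1/2 by norm_num, Real.rpow_add hP, Real.rpow_one,
      ← Real.sqrt_eq_rpow]
  set M := (P * sp / ε) * Q - S with hMdef
  set K := max M 0 with hKdef
  have hK0 : 0 ≤ K := le_max_right _ _
  have hMK : M ≤ K := le_max_left _ _
  have hQeq : Q = a * (M + S) := by
    rw [hadef, hMdef]
    field_simp
    ring
  have hsum : ∀ r : ℝ, ∑ i, (|v i| + (ε / sp) * r)^2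
      = V + 2 * (ε / sp) * S * r + (n : ℝ) * ((ε / sp) * r)^2 := by
    intro r
    have h1 : ∀ i ∈ Finset.univ, (|v i| + (ε / sp) * r)^2
        = (v i)^2 + (2 * (ε / sp) * r) * |v i| + ((ε / sp) * r)^2 := by
      intro i _
      rw [add_sq, sq_abs]; ring
    rw [Finset.sum_congr rfl h1, Finset.sum_add_distrib, Finset.sum_add_distrib,
      ← Finset.mul_sum, Finset.sum_const, Finset.card_univ, Fintype.card_fin,
      nsmul_eq_mul, ← hSdef, ← hVdef]
    ring
  have hg' : ∀ θ : EuclideanSpace ℝ (Fin p),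
      g θ = V / (2 * P) + a * S * ‖θ‖ + ((n : ℝ) * P * a^2 / 2) * ‖θ‖^2 := by
    intro θ
    rw [hg θ, hsum ‖θ‖, hadef]
    have h2 : sp * sp = P := by nlinarith [hsp2]
    field_simp
  have hcoeff : 1 / (2 * δ * P^2) = 1 / (2 * (n:ℝ) * P) := by
    rw [hnp]; ring_nf
  rw [hrpow, ← hMdef, ← hKdef, hcoeff]
  clear_value P sp S V Q a M K
  have h2nP : (0:ℝ) < 2 * (n:ℝ) * P := by positivity
  have hnPa : (0:ℝ) < (n:ℝ) * P * a := mul_pos (mul_pos hn' hP) ha0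
  apply IsGreatest.csSup_eq
  constructor
  · rcases le_or_gt M 0 with hM0 | hM0
    · refine ⟨0, ?_⟩
      have hK : K = 0 := by rw [hKdef]; exact max_eq_right hM0
      have h0 : ‖(0 : EuclideanSpace ℝ (Fin p))‖ = 0 := norm_zero
      rw [hK, hg' 0, h0, inner_zero_right]
      ring
    · have hMS : 0 < M + S := by linarith
      have hQpos : 0 < Q := by rw [hQeq]; exact mul_pos ha0 hMS
      have hQne : Q ≠ 0 := hQpos.ne'
      set r := M / ((n:ℝ) * P * a) with hrdef
      have hr0 : 0 < r := div_pos hM0 hnPa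
      refine ⟨(r / Q) • q, ?_⟩
      have hnorm : ‖(r / Q) • q‖ = r := by
        rw [norm_smul, Real.norm_eq_abs, abs_of_pos (div_pos hr0 hQpos), ← hQdef]
        field_simp
      have hinner : ⟪q, (r / Q) • q⟫ = r * Q := by
        rw [real_inner_smul_right, real_inner_self_eq_norm_sq, ← hQdef]
        field_simp
      rw [hinner, hg' _, hnorm]
      have hKM : K = M := by rw [hKdef]; exact max_eq_left hM0.le
      rw [hKM, hQeq, hrdef]
      have hna : (n:ℝ) * P * a ≠ 0 := hnPa.ne'
      field_simp
      ring
  · rintro x ⟨θ, rfl⟩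
    have hr0 : 0 ≤ ‖θ‖ := norm_nonneg θ
    set r := ‖θ‖ with hrdef
    have hip : ⟪q, θ⟫ ≤ Q * r := by rw [hQdef, hrdef]; exact real_inner_le_norm q θ
    rw [hg' θ, ← hrdef]
    have key : a * M * r - ((n:ℝ) * P * a^2 / 2) * r^2 ≤ K^2 / (2 * ((n:ℝ) * P)) :=
      stmt_9_aux a M K ((n:ℝ) * P) r ha0.le hr0 hMK (mul_pos hn' hP)
    have hQr : Q * r ≤ a * M * r + a * S * r := le_of_eq (by rw [hQeq]; ring)
    have hdiv : K^2 / (2 * ((n:ℝ) * P)) = 1 / (2 * (n:ℝ) * P) * K^2 := by ring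
    rw [hdiv] at key
    have hiv : V / (2 * P) = 1 / (2 * P) * V := by ring
    rw [hiv]
    linarith
end

section
/- Let λ > 1, γ ≥ 0, and x ∈ ℝ^n. Then min over v ∈ ℝ^n of (λ/2)‖x − v‖₂² − (1/(2n)) (γ − ‖v‖₁)₊² is attained at a point of the form v = ST(x; τ) for some τ ≥ 0, where ST is the entrywise soft-thresholding operator ST(x;τ)_i = sgn(x_i)·max(|x_i| − τ, 0). -/
open Finset Metric

lemma real_sign_mul_abs (a : ℝ) : Real.sign a * |a| = a := by
  rcases lt_trichotomy a 0 with h | h | h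
  · rw [Real.sign_of_neg h, abs_of_neg h]; ring
  · simp [h]
  · rw [Real.sign_of_pos h, abs_of_pos h]; ring

/-- Pointwise optimality of soft thresholding:
`s := sign a * max (|a|-τ) 0` minimizes `w ↦ (a-w)^2 + 2τ|w|`. -/
lemma st_pointwise (a τ w : ℝ) (hτ : 0 ≤ τ) :
    (a - Real.sign a * max (|a| - τ) 0)^2 + 2*τ*|Real.sign a * max (|a| - τ) 0|
      ≤ (a - w)^2 + 2*τ*|w| := by
  rcases le_or_gt (|a|) τ with h | h
  · have h0 : max (|a| - τ) 0 = 0 := max_eq_right (by linarith)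
    rw [h0, mul_zero, sub_zero, abs_zero, mul_zero]
    have h1 : a * w ≤ |a| * |w| := by
      calc a * w ≤ |a * w| := le_abs_self _
        _ = |a| * |w| := abs_mul a w
    nlinarith [abs_nonneg w, sq_abs w]
  · have ha : a ≠ 0 := by
      rintro rfl
      simp only [abs_zero] at h; linarith
    have h0 : max (|a| - τ) 0 = |a| - τ := max_eq_left (by linarith)
    have hsgn : |Real.sign a| = 1 := by
      rcases ha.lt_or_gt with h' | h'
      · rw [Real.sign_of_neg h']; norm_num
      · rw [Real.sign_of_pos h']; norm_num
    have h3 : Real.sign a * |a| = a := real_sign_mul_abs a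
    have habs : |Real.sign a * max (|a| - τ) 0| = |a| - τ := by
      rw [h0, abs_mul, hsgn, one_mul, abs_of_nonneg (by linarith)]
    have hdiff : a - Real.sign a * max (|a| - τ) 0 = Real.sign a * τ := by
      rw [h0, mul_sub, h3]; ring
    rw [habs, hdiff]
    have hsq : (Real.sign a * τ)^2 = τ^2 := by
      rw [mul_pow, ← sq_abs (Real.sign a), hsgn]; ring
    rw [hsq]
    nlinarith [abs_sub_abs_le_abs_sub a w, sq_abs (a - w),
      sq_nonneg (|a - w| - τ), abs_nonneg (a - w)]

/-- The minimizer of v ↦ (λ/2)‖x−v‖₂² − (1/(2n))(γ−‖v‖₁)₊² lies on the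
soft-thresholding path of x. -/
theorem stmt_12 (n : ℕ) (hn : 0 < n) (lam γ : ℝ) (hlam : 1 < lam) (hγ : 0 ≤ γ)
    (x : Fin n → ℝ)
    (ST : (Fin n → ℝ) → ℝ → (Fin n → ℝ))
    (hST : ∀ y τ i, ST y τ i = Real.sign (y i) * max (|y i| - τ) 0)
    (Φ : (Fin n → ℝ) → ℝ)
    (hΦ : ∀ v, Φ v = (lam / 2) * (∑ i, (x i - v i)^2)
      - (1 / (2 * (n : ℝ))) * (max (γ - ∑ i, |v i|) 0)^2) :
    ∃ τ : ℝ, 0 ≤ τ ∧ ∀ v : Fin n → ℝ, Φ (ST x τ) ≤ Φ v := by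
  have hn1 : (1:ℝ) ≤ (n:ℝ) := by exact_mod_cast hn
  set c : ℝ := 1 / (2 * (n:ℝ)) with hc_def
  have hc : 0 ≤ c := by positivity
  have hc2 : c ≤ 1/2 := by
    rw [hc_def]
    rw [div_le_div_iff₀ (by linarith) (by norm_num)]
    linarith
  -- bound on the penalty term
  have hpen : ∀ v : Fin n → ℝ, (max (γ - ∑ i, |v i|) 0)^2 ≤ γ^2 := by
    intro v
    have h1 : max (γ - ∑ i, |v i|) 0 ≤ γ :=
      max_le (by linarith [Finset.sum_nonneg (fun i (_ : i ∈ univ) => abs_nonneg (v i))]) hγ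
    exact pow_le_pow_left₀ (le_max_right _ _) h1 2
  -- continuity of Φ
  have hΦfun : Φ = fun v => (lam / 2) * (∑ i, (x i - v i)^2)
      - c * (max (γ - ∑ i, |v i|) 0)^2 := funext hΦ
  have hcont : Continuous Φ := by
    rw [hΦfun]
    apply Continuous.sub
    · exact continuous_const.mul
        (continuous_finset_sum _ fun i _ => (continuous_const.sub (continuous_apply i)).pow 2)
    · exact continuous_const.mul
        (((continuous_const.sub
          (continuous_finset_sum _ fun i _ => (continuous_apply i).abs)).max
          continuous_const).pow 2)
  -- Φ x ≤ 0
  have hx0 : Φ x ≤ 0 := by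
    rw [hΦ]
    have : ∑ i, (x i - x i)^2 = 0 := by simp
    rw [this]
    nlinarith [le_max_right (γ - ∑ i, |x i|) (0:ℝ), sq_nonneg (max (γ - ∑ i, |x i|) 0)]
  -- outside the ball of radius γ, Φ v ≥ 0
  have hout : ∀ v : Fin n → ℝ, v ∉ closedBall x γ → 0 ≤ Φ v := by
    intro v hv
    rw [Metric.mem_closedBall, not_le] at hv
    have hi : ∃ i, γ < |x i - v i| := by
      by_contra hcon
      push_neg at hcon
      have : dist v x ≤ γ := by
        rw [dist_eq_norm]
        refine (pi_norm_le_iff_of_nonneg hγ).2 fun i => ?_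
        have : |(v - x) i| = |x i - v i| := by
          simp [Pi.sub_apply, abs_sub_comm]
        rw [Real.norm_eq_abs, this]
        exact hcon i
      linarith
    obtain ⟨i, hi⟩ := hi
    have hsum : γ^2 ≤ ∑ j, (x j - v j)^2 := by
      have h1 : γ^2 ≤ (x i - v i)^2 := by
        nlinarith [abs_nonneg (x i - v i), sq_abs (x i - v i)]
      calc γ^2 ≤ (x i - v i)^2 := h1
        _ ≤ ∑ j, (x j - v j)^2 :=
          Finset.single_le_sum (f := fun j => (x j - v j)^2) (fun j _ => sq_nonneg _) (mem_univ i)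
    rw [hΦ]
    have hp := hpen v
    nlinarith [sq_nonneg γ]
  -- global minimizer exists
  obtain ⟨w, hwmem, hwmin⟩ := (isCompact_closedBall x γ).exists_isMinOn
    ⟨x, mem_closedBall_self hγ⟩ hcont.continuousOn
  have hglob : ∀ v, Φ w ≤ Φ v := by
    intro v
    by_cases hv : v ∈ closedBall x γ
    · exact hwmin hv
    · have := hout v hv
      have := hwmin (mem_closedBall_self hγ)
      simp only [Set.mem_setOf_eq] at this
      linarith
  set A : ℝ := ∑ i, |x i| with hA_def
  set t : ℝ := ∑ i, |w i| with ht_def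
  have hA0 : 0 ≤ A := Finset.sum_nonneg fun i _ => abs_nonneg _
  have ht0 : 0 ≤ t := Finset.sum_nonneg fun i _ => abs_nonneg _
  rcases le_or_gt A t with hcase | hcase
  · -- take τ = 0 : ST x 0 = x
    refine ⟨0, le_refl 0, fun v => ?_⟩
    have hSTx : ST x 0 = x := by
      funext i
      rw [hST, sub_zero, max_eq_left (abs_nonneg _), real_sign_mul_abs]
    rw [hSTx]
    have h1 : Φ x ≤ Φ w := by
      rw [hΦ x, hΦ w]
      have hm : max (γ - t) 0 ≤ max (γ - A) 0 := max_le_max (by linarith) le_rfl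
      have hm2 : (max (γ - t) 0)^2 ≤ (max (γ - A) 0)^2 :=
        pow_le_pow_left₀ (le_max_right _ _) hm 2
      have hxx : ∑ i, (x i - x i)^2 = 0 := by simp
      have hww : 0 ≤ ∑ i, (x i - w i)^2 := Finset.sum_nonneg fun i _ => sq_nonneg _
      rw [hxx]
      have := mul_le_mul_of_nonneg_left hm2 hc
      nlinarith
    linarith [hglob v]
  · -- IVT: find τ with ‖ST x τ‖₁ = t
    set F : ℝ → ℝ := fun τ => ∑ i, max (|x i| - τ) 0 with hF_def
    have hFc : ContinuousOn F (Set.Icc 0 A) :=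
      (continuous_finset_sum _ fun i _ =>
        (continuous_const.sub continuous_id).max continuous_const).continuousOn
    have hFA : F A = 0 := by
      apply Finset.sum_eq_zero
      intro i _
      have : |x i| ≤ A := Finset.single_le_sum (fun j (_ : j ∈ univ) => abs_nonneg (x j)) (mem_univ i)
      exact max_eq_right (by linarith)
    have hF0 : F 0 = A := by
      rw [hF_def, hA_def]
      exact Finset.sum_congr rfl fun i _ => by rw [sub_zero, max_eq_left (abs_nonneg _)]
    have htmem : t ∈ Set.Icc (F A) (F 0) := by
      rw [hFA, hF0]; exact ⟨ht0, le_of_lt hcase⟩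
    obtain ⟨τ, hτmem, hτeq⟩ := intermediate_value_Icc' hA0 hFc htmem
    refine ⟨τ, hτmem.1, fun v => ?_⟩
    -- |ST x τ i| = max (|x i| - τ) 0
    have hSTabs : ∀ i, |ST x τ i| = max (|x i| - τ) 0 := by
      intro i
      rw [hST]
      rcases eq_or_ne (x i) 0 with h0 | h0
      · rw [h0, Real.sign_zero, zero_mul, abs_zero]
        exact (max_eq_right (by linarith [hτmem.1])).symm
      · have hsgn : |Real.sign (x i)| = 1 := by
          rcases h0.lt_or_gt with h' | h'
          · rw [Real.sign_of_neg h']; norm_num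
          · rw [Real.sign_of_pos h']; norm_num
        rw [abs_mul, hsgn, one_mul, abs_of_nonneg (le_max_right _ _)]
    have hl1 : ∑ i, |ST x τ i| = t := by
      rw [Finset.sum_congr rfl fun i _ => hSTabs i]
      exact hτeq
    -- sum of pointwise inequalities against w
    have hpt : ∀ i ∈ univ, (x i - ST x τ i)^2 + 2*τ*|ST x τ i|
        ≤ (x i - w i)^2 + 2*τ*|w i| := by
      intro i _
      rw [hST]
      exact st_pointwise (x i) τ (w i) hτmem.1
    have hsum := Finset.sum_le_sum hpt
    rw [Finset.sum_add_distrib, Finset.sum_add_distrib, ← Finset.mul_sum, ← Finset.mul_sum,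
      hl1] at hsum
    have hkey : ∑ i, (x i - ST x τ i)^2 ≤ ∑ i, (x i - w i)^2 := by linarith
    have h1 : Φ (ST x τ) ≤ Φ w := by
      rw [hΦ (ST x τ), hΦ w, hl1]
      have := mul_le_mul_of_nonneg_left hkey (by linarith : (0:ℝ) ≤ lam / 2)
      linarith
    linarith [hglob v]
end

section
/- Let λ > 1, γ ≥ 0, and x ∈ ℝ^n with ‖x‖₁ > γ. Then min_{v ∈ ℝ^n} (λ/2)‖x − v‖₂² − (1/(2n))(γ − ‖v‖₁)₊² = 0, attained at v = x. -/
/-- If ‖x‖₁ > γ, the minimum of v ↦ (λ/2)‖x−v‖₂² − (1/(2n))(γ−‖v‖₁)₊²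
equals 0 and is attained at v = x. -/
theorem stmt_13 (n : ℕ) (hn : 0 < n) (lam γ : ℝ) (hlam : 1 < lam) (hγ : 0 ≤ γ)
    (x : Fin n → ℝ) (hx : γ < ∑ i, |x i|)
    (Φ : (Fin n → ℝ) → ℝ)
    (hΦ : ∀ v, Φ v = (lam / 2) * (∑ i, (x i - v i)^2)
      - (1 / (2 * (n : ℝ))) * (max (γ - ∑ i, |v i|) 0)^2) :
    Φ x = 0 ∧ ∀ v : Fin n → ℝ, Φ x ≤ Φ v := by
  have hnpos : (0:ℝ) < n := Nat.cast_pos.mpr hn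
  have hΦx : Φ x = 0 := by
    rw [hΦ]
    have h1 : (∑ i, (x i - x i)^2) = 0 := by simp
    have h2 : max (γ - ∑ i, |x i|) 0 = 0 := max_eq_right (by linarith)
    rw [h1, h2]; ring
  refine ⟨hΦx, fun v => ?_⟩
  rw [hΦx, hΦ]
  set S := ∑ i, (x i - v i)^2 with hS
  have hSnn : 0 ≤ S := Finset.sum_nonneg fun i _ => sq_nonneg _
  set M := max (γ - ∑ i, |v i|) 0 with hM
  have hMnn : 0 ≤ M := le_max_right _ _
  -- M ≤ ∑ |x i - v i|
  have hT : M ≤ ∑ i, |x i - v i| := by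
    rcases le_or_gt (γ - ∑ i, |v i|) 0 with h | h
    · rw [hM, max_eq_right h]
      exact Finset.sum_nonneg fun i _ => abs_nonneg _
    · rw [hM, max_eq_left h.le]
      have : (∑ i, |x i|) - (∑ i, |v i|) ≤ ∑ i, |x i - v i| := by
        rw [← Finset.sum_sub_distrib]
        exact Finset.sum_le_sum fun i _ => abs_sub_abs_le_abs_sub _ _
      linarith
  -- Cauchy-Schwarz : (∑ |x i - v i|)^2 ≤ n * S
  have hCS : (∑ i, |x i - v i|)^2 ≤ (n : ℝ) * S := by
    calc (∑ i, |x i - v i|)^2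
        ≤ (n : ℝ) * ∑ i, |x i - v i|^2 := by
          simpa [sq, Finset.mul_sum] using sq_sum_le_card_mul_sum_sq
            (s := Finset.univ) (f := fun i : Fin n => |x i - v i|)
      _ = (n : ℝ) * S := by simp [hS, sq_abs]
  have hM2 : M^2 ≤ (n : ℝ) * S :=
    le_trans (pow_le_pow_left₀ hMnn hT 2) hCS
  have key : (1 / (2 * (n : ℝ))) * M^2 ≤ (1/2) * S := by
    rw [div_mul_eq_mul_div, one_mul, div_le_iff₀ (by positivity)]
    nlinarith
  nlinarith [mul_nonneg (by linarith : (0:ℝ) ≤ lam - 1) hSnn]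
end
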